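/- arXiv:2202.10390 — 6 statements merged into one kernel-verified Lean document; each statement's English description precedes it below -/
import Mathlib

section
/- Let E be a binary relation on V and define F(TC)(x,y) := (x = y) ∨ ∃ z, E(x,z) ∧ TC(z,y). Let φ(TC) := ∀ x y, (∃ z, E(x,z) ∧ TC(z,y)) ↔ (∃ z, TC(x,z) ∧ E(z,y)). Then φ is a loop invariant for F: φ holds for the empty relation, and φ(TC) implies φ(F(TC)). -/
/-! Writing `∘r` for relational composition, the invariant says that `TC` commutes with `E`, and
`F TC = Eq ⊔ E ∘r TC`. Composition distributes over `⊔` and has `Eq` as unit and `⊥` as zero,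
so `E ∘r (Eq ⊔ E ∘r TC) = E ⊔ E ∘r E ∘r TC = E ⊔ E ∘r TC ∘r E = (Eq ⊔ E ∘r TC) ∘r E`. -/

namespace Relation

local infixr:80 " ∘r " => Relation.Comp

variable {α β γ : Type*}

theorem comp_sup (r : α → β → Prop) (p q : β → γ → Prop) : r ∘r (p ⊔ q) = r ∘r p ⊔ r ∘r q := by
  ext a c
  simp only [Comp, Pi.sup_apply, sup_Prop_eq, and_or_left, exists_or]

theorem sup_comp (r s : α → β → Prop) (p : β → γ → Prop) : (r ⊔ s) ∘r p = r ∘r p ⊔ s ∘r p := by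
  ext a c
  simp only [Comp, Pi.sup_apply, sup_Prop_eq, or_and_right, exists_or]

theorem comp_bot (r : α → β → Prop) : r ∘r (⊥ : β → γ → Prop) = ⊥ := by
  ext a c
  simp [Comp]

theorem bot_comp (p : β → γ → Prop) : (⊥ : α → β → Prop) ∘r p = ⊥ := by
  ext a c
  simp [Comp]

theorem eq_sup_comp_comm_of_comp_comm {r p : α → α → Prop} (h : r ∘r p = p ∘r r) :
    r ∘r ((· = ·) ⊔ r ∘r p) = ((· = ·) ⊔ r ∘r p) ∘r r := by
  rw [comp_sup, sup_comp, comp_eq, eq_comp, comp_assoc, ← h]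

end Relation

open Relation in
theorem beyond_magic_invariant {V : Type*} (E : V → V → Prop)
    (F : (V → V → Prop) → V → V → Prop)
    (hF : F = fun TC x y => x = y ∨ ∃ z, E x z ∧ TC z y)
    (φ : (V → V → Prop) → Prop)
    (hφ : φ = fun TC => ∀ x y, (∃ z, E x z ∧ TC z y) ↔ (∃ z, TC x z ∧ E z y)) :
    φ (fun _ _ => False) ∧ ∀ TC, φ TC → φ (F TC) := by
  have hφ_comm : ∀ TC, φ TC ↔ Comp E TC = Comp TC E := fun TC => by
    simp only [hφ, funext_iff, eq_iff_iff, Comp]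
  have hF_sup : ∀ TC, F TC = (· = ·) ⊔ Comp E TC := fun TC => by
    rw [hF]
    rfl
  refine ⟨(hφ_comm _).2 ?_, fun TC h => ?_⟩
  · exact (comp_bot E).trans (bot_comp E).symm
  · rw [hφ_comm, hF_sup]
    exact eq_sup_comp_comm_of_comp_comm ((hφ_comm TC).1 h)
end

section
/- Let E be a binary relation on V, a : V, F(TC)(x,y) := (x = y) ∨ ∃ z, E(x,z) ∧ TC(z,y), G(TC)(y) := TC(a,y), and H(Q)(y) := (y = a) ∨ ∃ z, Q(z) ∧ E(z,y). If TC satisfies the invariant ∀ x y, (∃ z, E(x,z) ∧ TC(z,y)) ↔ (∃ z, TC(x,z) ∧ E(z,y)), then G(F(TC)) = H(G(TC)). -/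
theorem beyond_magic_conditional_fgh {V : Type*} (E : V → V → Prop) (a : V)
    (F : (V → V → Prop) → V → V → Prop)
    (G : (V → V → Prop) → V → Prop)
    (H : (V → Prop) → V → Prop)
    (hF : F = fun TC x y => x = y ∨ ∃ z, E x z ∧ TC z y)
    (hG : G = fun TC y => TC a y)
    (hH : H = fun Q y => y = a ∨ ∃ z, Q z ∧ E z y)
    (TC : V → V → Prop)
    (hinv : ∀ x y, (∃ z, E x z ∧ TC z y) ↔ (∃ z, TC x z ∧ E z y)) :
    G (F TC) = H (G TC) := by
  subst hF hG hH
  funext y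
  exact propext (or_congr eq_comm (hinv a y))
end

section
/- Combining the previous two facts: with F, G, H as in the beyond-magic example, for every n we have G(F^[n](∅)) = H^[n](G(∅)), where ∅ denotes the empty relation/set. Hence the unoptimized right-recursive program and the optimized reachability program compute the same answer at every iteration. -/
/-!
The right-recursive step `F` and the reachability step `H` are related by `G ∘ F = H ∘ G` only on
relations `TC` that commute with `E` under composition: one unfolding of `F TC` from `a` yields
`E ∘ TC`, one step of `H` yields `TC ∘ E`. Commuting with `E` holds for the empty relation and is
preserved by `F`, so it is a loop invariant, and the FGH argument goes through along the iteration.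
-/

open Relation

theorem Function.iterate_semiconj_of_invariant {α β : Type*} {F : α → α} {G : α → β} {H : β → β}
    (φ : α → Prop) (hφ : ∀ x, φ x → φ (F x)) (hGH : ∀ x, φ x → G (F x) = H (G x))
    {x : α} (hx : φ x) (n : ℕ) : G (F^[n] x) = H^[n] (G x) := by
  induction n generalizing x with
  | zero => rfl
  | succ n ih =>
    rw [Function.iterate_succ_apply, Function.iterate_succ_apply, ih (hφ x hx), hGH x hx]

section Reachability

variable {V : Type*} (E : V → V → Prop)

theorem comp_right_step_comm {TC : V → V → Prop} (h : Comp E TC = Comp TC E) :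
    Comp E (fun x y => x = y ∨ ∃ z, E x z ∧ TC z y) =
      Comp (fun x y => x = y ∨ ∃ z, E x z ∧ TC z y) E := by
  funext x y
  apply propext
  constructor
  · rintro ⟨z, hxz, rfl | ⟨w, hzw, hwy⟩⟩
    · exact ⟨x, Or.inl rfl, hxz⟩
    · obtain ⟨v, hzv, hvy⟩ := (congrFun₂ h z y).mp ⟨w, hzw, hwy⟩
      exact ⟨v, Or.inr ⟨z, hxz, hzv⟩, hvy⟩
  · rintro ⟨z, rfl | ⟨w, hxw, hwz⟩, hzy⟩
    · exact ⟨y, hzy, Or.inl rfl⟩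
    · obtain ⟨v, hwv, hvy⟩ := (congrFun₂ h w y).mpr ⟨z, hwz, hzy⟩
      exact ⟨w, hxw, Or.inr ⟨v, hwv, hvy⟩⟩

theorem reach_step_of_comp_comm (a : V) {TC : V → V → Prop} (h : Comp E TC = Comp TC E) :
    (fun y => a = y ∨ ∃ z, E a z ∧ TC z y) = fun y => y = a ∨ ∃ z, TC a z ∧ E z y := by
  funext y
  rw [eq_comm (a := a)]
  exact congrArg (y = a ∨ ·) (congrFun₂ h a y)

end Reachability

theorem beyond_magic_correct {V : Type*} (E : V → V → Prop) (a : V)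
    (F : (V → V → Prop) → V → V → Prop)
    (G : (V → V → Prop) → V → Prop)
    (H : (V → Prop) → V → Prop)
    (hF : F = fun TC x y => x = y ∨ ∃ z, E x z ∧ TC z y)
    (hG : G = fun TC y => TC a y)
    (hH : H = fun Q y => y = a ∨ ∃ z, Q z ∧ E z y)
    (n : ℕ) :
    G (F^[n] (fun _ _ => False)) = H^[n] (G (fun _ _ => False)) := by
  subst hF hG hH
  refine Function.iterate_semiconj_of_invariant (G := fun TC y => TC a y)
    (H := fun Q y => y = a ∨ ∃ z, Q z ∧ E z y) (fun TC => Comp E TC = Comp TC E)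
    (fun _ => comp_right_step_comm E) (fun _ => reach_step_of_comp_comm E a) ?_ n
  funext x y
  simp [Comp]
end

section
/- Generalized semi-naive evaluation is correct: let S be a complete distributive lattice, F : S → S monotone, and define b ⊖ a := ⨅ {c | b ≤ a ⊕ c}. Define sequences X₀ = ⊥, X_{t+1} = F(X_t) for the naive program, and Y₀ = ⊥, Δ₀ = F(⊥), Y_{t+1} = Y_t ⊕ Δ_t, Δ_{t+1} = F(Y_{t+1}) ⊖ Y_{t+1} for the semi-naive program. Then for all t, Y_{t+1} = X_{t+1} (equivalently, defining G(X) := (X, F(X) ⊖ X) and H(X,Δ) := (X ⊕ Δ, F(X ⊕ Δ) ⊖ (X ⊕ Δ)), one has G(F(X)) = H(G(X)) for all X in the inflationary chain). -/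
/-!
In a coframe the generalized difference `sInf {c | b ≤ a ⊔ c}` is the co-Heyting difference
`b \ a`, and `a ⊔ b \ a = a ⊔ b`. Hence each semi-naive step computes `Y ⊔ F Y`, which equals
`F Y` along the Kleene chain because that chain is increasing.
-/

open Order

theorem sInf_setOf_le_sup_eq_sdiff {S : Type*} [Coframe S] (a b : S) :
    sInf {c | b ≤ a ⊔ c} = b \ a :=
  IsLeast.csInf_eq ⟨le_sup_sdiff, fun _ hc => sdiff_le_iff.2 hc⟩

theorem Monotone.monotone_of_zero_eq_bot_of_succ_eq {α : Type*} [Preorder α] [OrderBot α]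
    {f : α → α} (hf : Monotone f) {x : ℕ → α} (h0 : x 0 = ⊥) (hx : ∀ t, x (t + 1) = f (x t)) :
    Monotone x := by
  have hx_iterate : x = fun t => f^[t] ⊥ := by
    funext t
    induction t with
    | zero => exact h0
    | succ t ih => rw [hx, ih, Function.iterate_succ_apply']
  exact hx_iterate ▸ hf.monotone_iterate_of_le_map bot_le

theorem seminaive_correct {S : Type*} [CompletelyDistribLattice S]
    (F : S → S) (hF : Monotone F)
    (X Y Δ : ℕ → S)
    (hX0 : X 0 = ⊥) (hX : ∀ t, X (t + 1) = F (X t))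
    (hY0 : Y 0 = ⊥) (hΔ0 : Δ 0 = F ⊥)
    (hY : ∀ t, Y (t + 1) = Y t ⊔ Δ t)
    (hΔ : ∀ t, Δ (t + 1) = sInf {c | F (Y (t + 1)) ≤ Y (t + 1) ⊔ c}) :
    ∀ t, Y (t + 1) = X (t + 1) := by
  have hX_mono : Monotone X := hF.monotone_of_zero_eq_bot_of_succ_eq hX0 hX
  intro t
  induction t with
  | zero => rw [hY, hY0, hΔ0, bot_sup_eq, hX, hX0]
  | succ t ih =>
    calc Y (t + 2) = Y (t + 1) ⊔ F (Y (t + 1)) \ Y (t + 1) := by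
          rw [hY, hΔ, sInf_setOf_le_sup_eq_sdiff]
      _ = X (t + 1) ⊔ X (t + 2) := by rw [sup_sdiff_self, ih, hX (t + 1)]
      _ = X (t + 2) := sup_eq_right.2 (hX_mono (Nat.le_succ _))
end

section
/- Connected components FGH verification: let E be a symmetric-or-arbitrary binary relation on V, L : V → ℕ∞ a labeling, F(TC)(x,y) := (x = y) ∨ ∃ z, E(x,z) ∧ TC(z,y), G(TC)(x) := ⨅ {L(y) | TC(x,y)} (infimum in ℕ∞), and H(CC)(x) := min(L(x), ⨅ {CC(y) | E(x,y)}). Then for every binary relation TC, G(F(TC)) = H(G(TC)). -/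
theorem iInf_eq_or_exists_and_eq_inf {α V : Type*} [CompleteLattice α] (E R : V → V → Prop)
    (f : V → α) (x : V) :
    ⨅ (y) (_ : x = y ∨ ∃ z, E x z ∧ R z y), f y =
      f x ⊓ ⨅ (z) (_ : E x z), ⨅ (y) (_ : R z y), f y := by
  simp only [iInf_or, iInf_inf_eq, iInf_iInf_eq_right, iInf_exists, iInf_and]
  rw [iInf_comm]
  exact congrArg _ (iInf_congr fun z => iInf_comm)

theorem connected_components_fgh {V : Type*} (E : V → V → Prop) (L : V → ℕ∞)
    (F : (V → V → Prop) → V → V → Prop)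
    (G : (V → V → Prop) → V → ℕ∞)
    (H : (V → ℕ∞) → V → ℕ∞)
    (hF : F = fun TC x y => x = y ∨ ∃ z, E x z ∧ TC z y)
    (hG : G = fun TC x => ⨅ (y) (_ : TC x y), L y)
    (hH : H = fun CC x => min (L x) (⨅ (y) (_ : E x y), CC y)) :
    ∀ TC : V → V → Prop, G (F TC) = H (G TC) := by
  subst hF hG hH
  exact fun TC => funext (iInf_eq_or_exists_and_eq_inf E TC L)
end

section
/- Stratification correctness: let K : α → α and F : α × β → β be monotone (ω-continuous) operators on complete lattices α, β, and let L(z, x) := (K(z), F(z, x)). Then lfp(L) = (lfp(K), lfp(λ x, F(lfp(K), x))), i.e., the least fixpoint of the combined operator equals the pair consisting of the least fixpoint of K and the least fixpoint of F with first argument frozen at lfp(K). -/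
/-!
The pair `(lfp K, lfp (F (lfp K, ·)))` is a fixpoint of the combined operator, so it lies above
its least fixpoint `p`. Conversely, the first component of `p` is a fixpoint of `K`, hence above
`lfp K`; by monotonicity of `F` this makes the second component of `p` a pre-fixpoint of
`F (lfp K, ·)`, hence above its least fixpoint.
-/

namespace OrderHom

theorem lfp_prod_comp_fst {α β : Type*} [CompleteLattice α] [CompleteLattice β]
    (K : α →o α) (F : α × β →o β) :
    lfp ((K.comp fst).prod F) = (lfp K, lfp (curry F (lfp K))) := by
  set L := (K.comp fst).prod F
  set G := curry F (lfp K)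
  have hL : L (lfp L) = lfp L := map_lfp L
  apply le_antisymm
  · refine lfp_le_fixed L ?_
    change (K (lfp K), F (lfp K, lfp G)) = (lfp K, lfp G)
    rw [map_lfp K]
    exact congrArg _ (map_lfp G)
  · have hfst : lfp K ≤ (lfp L).1 := lfp_le_fixed K (congrArg Prod.fst hL)
    have hsnd : lfp G ≤ (lfp L).2 := lfp_le G <|
      calc G (lfp L).2 = F (lfp K, (lfp L).2) := rfl
        _ ≤ F (lfp L) := F.mono ⟨hfst, le_rfl⟩
        _ = (lfp L).2 := congrArg Prod.snd hL
    exact ⟨hfst, hsnd⟩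

end OrderHom

theorem stratification_correct {α β : Type*} [CompleteLattice α] [CompleteLattice β]
    (K : α →o α) (F : α × β →o β) :
    OrderHom.lfp
      (⟨fun p => (K p.1, F p), fun p q h => ⟨K.mono h.1, F.mono h⟩⟩ :
        α × β →o α × β)
      = (OrderHom.lfp K,
         OrderHom.lfp ⟨fun x => F (OrderHom.lfp K, x),
           fun x y h => F.mono ⟨le_refl _, h⟩⟩) :=
  OrderHom.lfp_prod_comp_fst K F
end
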